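/- arXiv:2604.00573 — 6 statements merged into one kernel-verified Lean document; each statement's English description precedes it below -/
import Mathlib

section
/- Let H be a real Hilbert space, let T and 𝒜 be bounded linear operators on H with T injective, let D := range(T), and let A : H → H be any function satisfying A(T v) = 𝒜 v for every v ∈ H. Let ω ∈ ℝ and λ > ω. Then the following two conditions hold simultaneously: (1) ⟨T v, 𝒜 v⟩ ≤ ω ⟨T v, T v⟩ for all v ∈ H, and (2) there exists ε > 0 such that ‖(λT − 𝒜)* v‖ ≥ ε ‖v‖ for all v ∈ H; if and only if the following two conditions hold simultaneously: (1') ⟨u, A u − ω u⟩ ≤ 0 for all u ∈ D, and (2') for every w ∈ H there exists u ∈ D with λ u − A u = w. -/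
/-!
Since `A (T v) = 𝒜 v`, both conditions transfer pointwise along `v ↦ T v`: dissipativity of
`A - ωI` on `range T` is the weighted dissipativity of `{T, 𝒜}`, and `λI - A : range T → H` is
onto exactly when `B := λT - 𝒜` is. It remains to see that a bounded operator `B` between Hilbert
spaces is onto iff `B*` is bounded below. If `B` is onto, the open mapping theorem gives
preimages `u` of `w` with `‖u‖ ≤ C ‖w‖`, and `‖w‖² = ⟪u, B* w⟫ ≤ C ‖w‖ ‖B* w‖`. Conversely, if
`‖B* v‖ ≥ ε ‖v‖`, the form `⟪B B* v, w⟫ = ⟪B* v, B* w⟫` is coercive, so `B B*` is onto by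
Lax–Milgram, and hence so is `B`.
-/

open scoped InnerProductSpace RealInnerProductSpace

theorem forall_inner_le_mul_inner_iff_forall_mem_range {X H : Type*} [NormedAddCommGroup H]
    [InnerProductSpace ℝ H] {T Aop : X → H} {A : H → H} (hA : ∀ v, A (T v) = Aop v) (ω : ℝ) :
    (∀ v, ⟪T v, Aop v⟫ ≤ ω * ⟪T v, T v⟫) ↔ ∀ u ∈ Set.range T, ⟪u, A u - ω • u⟫ ≤ 0 := by
  simp only [Set.forall_mem_range, hA, inner_sub_right, real_inner_smul_right, sub_nonpos]

theorem surjective_smul_sub_iff_forall_exists_mem_range {X H : Type*} [AddCommGroup H]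
    [Module ℝ H] {T Aop : X → H} {A : H → H} (hA : ∀ v, A (T v) = Aop v) (lam : ℝ) :
    Function.Surjective (lam • T - Aop) ↔ ∀ w, ∃ u ∈ Set.range T, lam • u - A u = w := by
  simp only [Function.Surjective, Set.exists_range_iff, hA, Pi.sub_apply, Pi.smul_apply]

section RCLike

variable {𝕜 E F : Type*} [RCLike 𝕜] [NormedAddCommGroup E] [InnerProductSpace 𝕜 E]
  [CompleteSpace E] [NormedAddCommGroup F] [InnerProductSpace 𝕜 F] [CompleteSpace F]

theorem ContinuousLinearMap.exists_adjoint_bounded_below_of_surjective (B : E →L[𝕜] F)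
    (hB : Function.Surjective B) : ∃ ε > (0 : ℝ), ∀ v, ε * ‖v‖ ≤ ‖adjoint B v‖ := by
  obtain ⟨C, hC, hpre⟩ := B.exists_preimage_norm_le hB
  refine ⟨C⁻¹, inv_pos.mpr hC, fun v => ?_⟩
  obtain ⟨u, rfl, hu⟩ := hpre v
  rw [inv_mul_le_iff₀ hC]
  rcases (norm_nonneg (B u)).eq_or_lt with h0 | hpos
  · rw [← h0]; positivity
  refine le_of_mul_le_mul_right ?_ hpos
  calc ‖B u‖ * ‖B u‖ = RCLike.re ⟪u, adjoint B (B u)⟫_𝕜 := by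
        rw [adjoint_inner_right, inner_self_eq_norm_mul_norm]
    _ ≤ ‖u‖ * ‖adjoint B (B u)‖ := (RCLike.re_le_norm _).trans (norm_inner_le_norm _ _)
    _ ≤ C * ‖B u‖ * ‖adjoint B (B u)‖ := by gcongr
    _ = C * ‖adjoint B (B u)‖ * ‖B u‖ := by ring

end RCLike

section Real

variable {E F : Type*} [NormedAddCommGroup E] [InnerProductSpace ℝ E] [CompleteSpace E]
  [NormedAddCommGroup F] [InnerProductSpace ℝ F] [CompleteSpace F]

theorem InnerProductSpace.continuousLinearMapOfBilin_innerSL_comp (S : F →L[ℝ] F) :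
    continuousLinearMapOfBilin ((innerSL ℝ).comp S) = S :=
  ContinuousLinearMap.ext fun _ => (unique_continuousLinearMapOfBilin _ fun _ => rfl).symm

theorem ContinuousLinearMap.isCoercive_innerSL_comp_comp_adjoint (B : E →L[ℝ] F) {ε : ℝ}
    (hε : 0 < ε) (h : ∀ v, ε * ‖v‖ ≤ ‖adjoint B v‖) :
    IsCoercive ((innerSL ℝ).comp (B ∘L adjoint B)) := by
  refine ⟨ε ^ 2, by positivity, fun v => ?_⟩
  calc ε ^ 2 * ‖v‖ * ‖v‖ = (ε * ‖v‖) ^ 2 := by ring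
    _ ≤ ‖adjoint B v‖ ^ 2 := by gcongr; exact h v
    _ = (innerSL ℝ).comp (B ∘L adjoint B) v v := by
      rw [comp_apply, innerSL_apply_apply, comp_apply, real_inner_comm, ← adjoint_inner_left,
        real_inner_self_eq_norm_sq]

theorem ContinuousLinearMap.surjective_of_adjoint_bounded_below (B : E →L[ℝ] F) {ε : ℝ}
    (hε : 0 < ε) (h : ∀ v, ε * ‖v‖ ≤ ‖adjoint B v‖) : Function.Surjective B := by
  have hBB := (B.isCoercive_innerSL_comp_comp_adjoint hε h).range_eq_top
  rw [InnerProductSpace.continuousLinearMapOfBilin_innerSL_comp] at hBB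
  intro w
  obtain ⟨v, hv⟩ := LinearMap.range_eq_top.mp hBB w
  exact ⟨adjoint B v, hv⟩

end Real

theorem PIE_conditions_iff_LumerPhillips_conditions_general
    {H : Type*} [NormedAddCommGroup H] [InnerProductSpace ℝ H] [CompleteSpace H]
    (T Aop : H →L[ℝ] H) (A : H → H)
    (hA : ∀ v : H, A (T v) = Aop v) (ω lam : ℝ) :
    ((∀ v : H, ⟪T v, Aop v⟫ ≤ ω * ⟪T v, T v⟫) ∧
      ∃ ε > (0 : ℝ), ∀ v : H,
        ε * ‖v‖ ≤ ‖ContinuousLinearMap.adjoint (lam • T - Aop) v‖) ↔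
    ((∀ u ∈ Set.range ⇑T, ⟪u, A u - ω • u⟫ ≤ 0) ∧
      ∀ w : H, ∃ u ∈ Set.range ⇑T, lam • u - A u = w) := by
  have hsurj := surjective_smul_sub_iff_forall_exists_mem_range hA lam
  rw [← FunLike.coe_smul, ← FunLike.coe_sub] at hsurj
  rw [forall_inner_le_mul_inner_iff_forall_mem_range hA, ← hsurj]
  refine and_congr_right fun _ => ⟨fun ⟨_, hε, h⟩ => ?_, fun h => ?_⟩
  · exact (lam • T - Aop).surjective_of_adjoint_bounded_below hε h
  · exact (lam • T - Aop).exists_adjoint_bounded_below_of_surjective h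

/-- Theorem 2 of the paper: the PIE-representation conditions
(weighted dissipativity of `{T, 𝒜}` and lower bound on `(λT − 𝒜)*`) are equivalent to the
Lumer–Phillips conditions (dissipativity of `A − ωI` on `D = range T` and surjectivity of
`λI − A : D → H`). -/
theorem PIE_conditions_iff_LumerPhillips_conditions
    {H : Type*} [NormedAddCommGroup H] [InnerProductSpace ℝ H] [CompleteSpace H]
    (T Aop : H →L[ℝ] H) (hT : Function.Injective ⇑T) (A : H → H)
    (hA : ∀ v : H, A (T v) = Aop v) (ω lam : ℝ) (hlam : ω < lam) :
    ((∀ v : H, ⟪T v, Aop v⟫ ≤ ω * ⟪T v, T v⟫) ∧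
      ∃ ε > (0 : ℝ), ∀ v : H,
        ε * ‖v‖ ≤ ‖ContinuousLinearMap.adjoint (lam • T - Aop) v‖) ↔
    ((∀ u ∈ Set.range ⇑T, ⟪u, A u - ω • u⟫ ≤ 0) ∧
      ∀ w : H, ∃ u ∈ Set.range ⇑T, lam • u - A u = w) :=
  PIE_conditions_iff_LumerPhillips_conditions_general T Aop A hA ω lam
end

section
/- Let H be a real Hilbert space, let P be a self-adjoint bounded linear operator on H, let ε₁, ε₂ > 0, and let B be a bounded linear operator on H. Assume ⟨v, P v⟩ ≥ ε₁² ‖v‖² for all v ∈ H and ‖B v‖ ≥ ε₂ ‖v‖ for all v ∈ H. Then ‖P‖ · ⟨B v, P (B v)⟩ ≥ ε₁² ε₂² ⟨v, P v⟩ for all v ∈ H, where ‖P‖ is the operator norm of P. -/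
open scoped RealInnerProductSpace

/-- the key step of Theorem 3 of the paper, transferring a lower bound on
`B` from the unweighted norm to the `P`-weighted inner product. -/
theorem weighted_lower_bound_transfer
    {H : Type*} [NormedAddCommGroup H] [InnerProductSpace ℝ H] [CompleteSpace H]
    (P B : H →L[ℝ] H) (hP : ∀ x y : H, ⟪P x, y⟫ = ⟪x, P y⟫)
    (ε₁ ε₂ : ℝ) (hε₁ : 0 < ε₁) (hε₂ : 0 < ε₂)
    (hPcoercive : ∀ v : H, ε₁ ^ 2 * ‖v‖ ^ 2 ≤ ⟪v, P v⟫)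
    (hB : ∀ v : H, ε₂ * ‖v‖ ≤ ‖B v‖) :
    ∀ v : H, ε₁ ^ 2 * ε₂ ^ 2 * ⟪v, P v⟫ ≤ ‖P‖ * ⟪B v, P (B v)⟫ := by
  intro v
  have h1 : ⟪v, P v⟫ ≤ ‖P‖ * ‖v‖ ^ 2 := by
    calc ⟪v, P v⟫ ≤ ‖v‖ * ‖P v‖ := real_inner_le_norm v (P v)
    _ ≤ ‖v‖ * (‖P‖ * ‖v‖) := by
        have := P.le_opNorm v
        nlinarith [norm_nonneg v]
    _ = ‖P‖ * ‖v‖ ^ 2 := by ring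
  have h2 : ε₁ ^ 2 * ε₂ ^ 2 * ‖v‖ ^ 2 ≤ ⟪B v, P (B v)⟫ := by
    have hb := hB v
    have hc := hPcoercive (B v)
    nlinarith [mul_le_mul hb hb (by positivity) (norm_nonneg (B v)), sq_nonneg ε₁, norm_nonneg v]
  have hPn : (0:ℝ) ≤ ‖P‖ := norm_nonneg _
  nlinarith [sq_nonneg (ε₁ * ε₂), sq_nonneg ε₁, sq_nonneg ε₂]
end

section
/- Let H be a real Hilbert space, let T, 𝒜, P be bounded linear operators on H with T injective and P self-adjoint, let D := range(T), and let A : H → H be any function satisfying A(T v) = 𝒜 v for every v ∈ H. Let ε₁, ε₂ > 0, ω ∈ ℝ and λ > ω. Assume: (i) ⟨v, P v⟩ ≥ ε₁² ‖v‖² for all v ∈ H; (ii) ⟨v, (T* P 𝒜 + 𝒜* P T) v⟩ ≤ 2ω ⟨v, (T* P T) v⟩ for all v ∈ H; and (iii) ⟨v, (λT − 𝒜)((λT − 𝒜)* v)⟩ ≥ ε₂² ‖v‖² for all v ∈ H. Then ⟨u, P (A u)⟩ ≤ ω ⟨u, P u⟩ for all u ∈ D, and for every w ∈ H there exists u ∈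 D with λ u − A u = w. -/
open scoped RealInnerProductSpace

/-- semigroup-free content of Corollary 3 of the paper: feasibility of the
linear operator inequalities (i)–(iii) implies that `A = 𝒜 ∘ T⁻¹` is dissipative with rate `ω`
in the `P`-weighted inner product on `D = range T`, and that `λI − A` maps `D` onto `H`. -/
theorem LPI_implies_weighted_dissipative_and_surjective
    {H : Type*} [NormedAddCommGroup H] [InnerProductSpace ℝ H] [CompleteSpace H]
    (T Aop P : H →L[ℝ] H) (hT : Function.Injective ⇑T)
    (hP : ∀ x y : H, ⟪P x, y⟫ = ⟪x, P y⟫)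
    (A : H → H) (hA : ∀ v : H, A (T v) = Aop v)
    (ε₁ ε₂ : ℝ) (hε₁ : 0 < ε₁) (hε₂ : 0 < ε₂) (ω lam : ℝ) (hlam : ω < lam)
    (hPcoercive : ∀ v : H, ε₁ ^ 2 * ‖v‖ ^ 2 ≤ ⟪v, P v⟫)
    (hdiss : ∀ v : H,
      ⟪v, ((ContinuousLinearMap.adjoint T).comp (P.comp Aop)
            + (ContinuousLinearMap.adjoint Aop).comp (P.comp T)) v⟫
        ≤ 2 * ω * ⟪v, ((ContinuousLinearMap.adjoint T).comp (P.comp T)) v⟫)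
    (hsurj : ∀ v : H,
      ε₂ ^ 2 * ‖v‖ ^ 2
        ≤ ⟪v, (lam • T - Aop) (ContinuousLinearMap.adjoint (lam • T - Aop) v)⟫) :
    (∀ u ∈ Set.range ⇑T, ⟪u, P (A u)⟫ ≤ ω * ⟪u, P u⟫) ∧
    (∀ w : H, ∃ u ∈ Set.range ⇑T, lam • u - A u = w) := by
  constructor
  · rintro u ⟨v, rfl⟩
    have h := hdiss v
    simp only [ContinuousLinearMap.add_apply, ContinuousLinearMap.comp_apply,
      inner_add_right, ContinuousLinearMap.adjoint_inner_right] at h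
    have h1 : ⟪Aop v, P (T v)⟫ = ⟪T v, P (Aop v)⟫ := by
      rw [← hP]; exact real_inner_comm _ _
    rw [h1] at h
    rw [hA]
    linarith
  · intro w
    set Bop := lam • T - Aop with hBop
    set C := Bop.comp (ContinuousLinearMap.adjoint Bop) with hC
    set a : H →L[ℝ] H →L[ℝ] ℝ := (innerSL ℝ).comp C with ha
    have hcoer : IsCoercive a := by
      refine ⟨ε₂ ^ 2, by positivity, fun u => ?_⟩
      have := hsurj u
      simp only [ha, hC, ContinuousLinearMap.comp_apply, innerSL_apply_apply]
      calc ε₂ ^ 2 * ‖u‖ * ‖u‖ = ε₂ ^ 2 * ‖u‖ ^ 2 := by ring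
        _ ≤ ⟪u, Bop ((ContinuousLinearMap.adjoint Bop) u)⟫ := this
        _ = ⟪Bop ((ContinuousLinearMap.adjoint Bop) u), u⟫ := real_inner_comm _ _
    have hsharp : InnerProductSpace.continuousLinearMapOfBilin a = C := by
      ext v
      apply ext_inner_right ℝ
      intro w
      rw [InnerProductSpace.continuousLinearMapOfBilin_apply]
      simp [ha]
    have hsurjC : Function.Surjective ⇑C := by
      have := hcoer.range_eq_top
      rw [hsharp] at this
      exact LinearMap.range_eq_top.mp this
    obtain ⟨v, hv⟩ := hsurjC w
    refine ⟨T ((ContinuousLinearMap.adjoint Bop) v), ⟨_, rfl⟩, ?_⟩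
    rw [hA]
    have : Bop ((ContinuousLinearMap.adjoint Bop) v) = w := hv
    simpa [hBop, ContinuousLinearMap.sub_apply, ContinuousLinearMap.smul_apply] using this
end

section
/- Fix integers n, d ≥ 1, reals a < b, and block matrices B = [B_{i,j}], C = [C_{i,j}] ∈ ℝ^{nd×nd} with n×n blocks indexed by i, j ∈ {0,…,d−1}. Define Q(z) ∈ ℝ^{nd×nd} blockwise by Q(z)_{i,j} = (z^{j−i}/(j−i)!) I_n for j ≥ i and 0 otherwise, and set K := B + C·Q(b−a). Assume K is invertible. If u : [a,b] → ℝⁿ is d times continuously differentiable on [a,b], satisfies u^{(d)}(s) = 0 for all s ∈ [a,b], and satisfies the boundary conditions Σ_{j=0}^{d−1} (B_{i,j} u^{(j)}(a) + C_{i,j} u^{(j)}(b)) = 0 for every i ∈ {0,…,d−1}, then u(s) = 0 for all s ∈ [a,b]. -/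
/-!
Since `u⁽ᵈ⁾ = 0`, every derivative `u⁽ᵏ⁾` with `k ≤ d` coincides on `[a,b]` with its Taylor
polynomial at `a` (Taylor's theorem with vanishing remainder). Evaluated at `b`, this says that
the stacked derivatives of `u` at `b` are `Q(b − a)` times those at `a`, so the boundary
conditions read `K · (u⁽ʲ⁾(a))ⱼ = 0`. As `K` is invertible, all derivatives of `u` at `a`
vanish, and then so does the Taylor polynomial `u`.
-/

open scoped Matrix

/-- The block-matrix `Q(z)`, with `n×n` blocks `Q(z)_{i,j} = (z^{j−i}/(j−i)!) Iₙ` for `j ≥ i`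
and `0` otherwise; block indices are encoded as the first component of `Fin d × Fin n`. -/
noncomputable def Qmat (n d : ℕ) (z : ℝ) : Matrix (Fin d × Fin n) (Fin d × Fin n) ℝ :=
  fun ip jq =>
    if ip.1 ≤ jq.1 ∧ ip.2 = jq.2 then
      z ^ ((jq.1 : ℕ) - (ip.1 : ℕ)) / Nat.factorial ((jq.1 : ℕ) - (ip.1 : ℕ))
    else 0

open Set Finset Nat

section IteratedDerivWithin

variable {𝕜 F : Type*} [NontriviallyNormedField 𝕜] [NormedAddCommGroup F] [NormedSpace 𝕜 F]
  {s : Set 𝕜}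

theorem iteratedDerivWithin_iteratedDerivWithin (m k : ℕ) (f : 𝕜 → F) :
    iteratedDerivWithin m (iteratedDerivWithin k f s) s = iteratedDerivWithin (m + k) f s := by
  have iterate (j : ℕ) (g : 𝕜 → F) :
      iteratedDerivWithin j g s = (fun h : 𝕜 → F => derivWithin h s)^[j] g :=
    funext fun _ => iteratedDerivWithin_eq_iterate
  rw [iterate, iterate, iterate, Function.iterate_add_apply]

theorem ContDiffOn.iteratedDerivWithin_of_add {f : 𝕜 → F} {k n : ℕ}
    (hf : ContDiffOn 𝕜 (k + n : ℕ) f s) (hs : UniqueDiffOn 𝕜 s) :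
    ContDiffOn 𝕜 n (iteratedDerivWithin k f s) s := by
  rw [contDiffOn_nat_iff_continuousOn_differentiableOn_deriv hs] at hf ⊢
  simp only [iteratedDerivWithin_iteratedDerivWithin]
  exact ⟨fun m hm => hf.1 (m + k) (by omega), fun m hm => hf.2 (m + k) (by omega)⟩

end IteratedDerivWithin

section Taylor

variable {E : Type*} [NormedAddCommGroup E] [NormedSpace ℝ E]

theorem eq_taylorWithinEval_of_iteratedDerivWithin_eq_zero {f : ℝ → E} {a b x : ℝ} {n : ℕ}
    (hab : a ≤ b) (hf : ContDiffOn ℝ (n + 1) f (Icc a b))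
    (hzero : ∀ y ∈ Icc a b, iteratedDerivWithin (n + 1) f (Icc a b) y = 0)
    (hx : x ∈ Icc a b) : f x = taylorWithinEval f n (Icc a b) a x := by
  have h := taylor_mean_remainder_bound (C := 0) hab hf hx (by simp +contextual [hzero])
  simpa [sub_eq_zero] using h

theorem iteratedDerivWithin_eq_sum_of_iteratedDerivWithin_eq_zero {u : ℝ → E} {a b s : ℝ}
    {d k : ℕ} (hab : a < b) (hu : ContDiffOn ℝ d u (Icc a b))
    (hud : ∀ y ∈ Icc a b, iteratedDerivWithin d u (Icc a b) y = 0) (hk : k ≤ d)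
    (hs : s ∈ Icc a b) :
    iteratedDerivWithin k u (Icc a b) s =
      ∑ m ∈ range (d - k),
        ((m ! : ℝ)⁻¹ * (s - a) ^ m) • iteratedDerivWithin (k + m) u (Icc a b) a := by
  obtain rfl | hkd := hk.eq_or_lt
  · simp [hud s hs]
  obtain ⟨n, hn⟩ : ∃ n, d - k = n + 1 := ⟨d - k - 1, by omega⟩
  have hu' : ContDiffOn ℝ (k + (n + 1) : ℕ) u (Icc a b) := by rwa [← hn, Nat.add_sub_cancel' hk]
  have hf := hu'.iteratedDerivWithin_of_add (uniqueDiffOn_Icc hab)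
  rw [eq_taylorWithinEval_of_iteratedDerivWithin_eq_zero (f := iteratedDerivWithin k u (Icc a b))
      hab.le (by exact_mod_cast hf) _ hs, taylor_within_apply, hn]
  · simp only [iteratedDerivWithin_iteratedDerivWithin, add_comm _ k]
  · simpa only [iteratedDerivWithin_iteratedDerivWithin, ← hn, Nat.sub_add_cancel hkd.le]
      using hud

end Taylor

noncomputable def derivJet (d : ℕ) {n : ℕ} (u : ℝ → Fin n → ℝ) (I : Set ℝ) (s : ℝ) :
    Fin d × Fin n → ℝ :=
  fun jq => iteratedDerivWithin jq.1 u I s jq.2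

theorem Qmat_mulVec_apply (n d : ℕ) (z : ℝ) (v : ℕ → Fin n → ℝ) (k : Fin d) (r : Fin n) :
    (Qmat n d z *ᵥ fun jq => v jq.1 jq.2) (k, r) =
      ∑ m ∈ range (d - k), (m ! : ℝ)⁻¹ * z ^ m * v (k + m) r := by
  have hrow (j : Fin d) : ∑ q, Qmat n d z (k, r) (j, q) * v j q =
      if (k : ℕ) ≤ j then z ^ ((j : ℕ) - k) / ((j : ℕ) - k)! * v j r else 0 := by
    unfold Qmat
    simp only [ite_and, ite_mul, zero_mul, ← Fin.le_def]
    split_ifs <;> simp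
  simp only [Matrix.mulVec, dotProduct, Fintype.sum_prod_type, hrow]
  rw [Fin.sum_univ_eq_sum_range (fun j => if k ≤ j then z ^ (j - k) / (j - k)! * v j r else 0),
    ← sum_filter, range_eq_Ico, Ico_filter_le, max_eq_right k.val.zero_le, sum_Ico_eq_sum_range]
  simp [div_eq_inv_mul]

theorem Qmat_mulVec_derivJet {n d : ℕ} {a b : ℝ} {u : ℝ → Fin n → ℝ} (hab : a < b)
    (hu : ContDiffOn ℝ d u (Icc a b))
    (hud : ∀ s ∈ Icc a b, iteratedDerivWithin d u (Icc a b) s = 0) :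
    Qmat n d (b - a) *ᵥ derivJet d u (Icc a b) a = derivJet d u (Icc a b) b := by
  ext ⟨k, r⟩
  refine (Qmat_mulVec_apply n d (b - a) (iteratedDerivWithin · u (Icc a b) a) k r).trans ?_
  rw [derivJet, iteratedDerivWithin_eq_sum_of_iteratedDerivWithin_eq_zero hab hu hud k.is_lt.le
    (right_mem_Icc.2 hab.le)]
  simp [Finset.sum_apply, smul_eq_mul, mul_assoc]

theorem boundary_value_problem_uniqueness_general
    (n d : ℕ) (a b : ℝ) (hab : a < b)
    (B C : Matrix (Fin d × Fin n) (Fin d × Fin n) ℝ)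
    (K : Matrix (Fin d × Fin n) (Fin d × Fin n) ℝ)
    (hK : K = B + C * Qmat n d (b - a)) (hKinv : IsUnit K.det)
    (u : ℝ → Fin n → ℝ) (hu : ContDiffOn ℝ d u (Set.Icc a b))
    (hud : ∀ s ∈ Set.Icc a b, iteratedDerivWithin d u (Set.Icc a b) s = 0)
    (hbc : ∀ i : Fin d, ∀ p : Fin n,
      ∑ j : Fin d, ∑ q : Fin n,
        (B (i, p) (j, q) * iteratedDerivWithin (j : ℕ) u (Set.Icc a b) a q
          + C (i, p) (j, q) * iteratedDerivWithin (j : ℕ) u (Set.Icc a b) b q) = 0) :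
    ∀ s ∈ Set.Icc a b, u s = 0 := by
  have hKjet : K *ᵥ derivJet d u (Icc a b) a = 0 := by
    ext ⟨i, p⟩
    rw [hK, Matrix.add_mulVec, ← Matrix.mulVec_mulVec, Qmat_mulVec_derivJet hab hu hud,
      Pi.zero_apply, ← hbc i p]
    simp only [Pi.add_apply, Matrix.mulVec, dotProduct, Fintype.sum_prod_type, derivJet,
      ← sum_add_distrib]
  have hjet : derivJet d u (Icc a b) a = 0 := Matrix.eq_zero_of_mulVec_eq_zero hKinv.ne_zero hKjet
  intro s hs
  rw [← iteratedDerivWithin_zero (f := u) (s := Icc a b),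
    iteratedDerivWithin_eq_sum_of_iteratedDerivWithin_eq_zero hab hu hud d.zero_le hs]
  refine sum_eq_zero fun m hm => ?_
  have hm0 : iteratedDerivWithin m u (Icc a b) a = 0 :=
    funext fun q => congrFun hjet (⟨m, by simpa using hm⟩, q)
  rw [zero_add, hm0, smul_zero]

/-- uniqueness part of Corollary 2 of the paper: if `K = B + C Q(b−a)` is
invertible, then any `d` times continuously differentiable `u` with `u⁽ᵈ⁾ = 0` on `[a,b]`
satisfying the boundary conditions `Σⱼ (B_{i,j} u⁽ʲ⁾(a) + C_{i,j} u⁽ʲ⁾(b)) = 0` vanishes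
identically on `[a,b]`. -/
theorem boundary_value_problem_uniqueness
    (n d : ℕ) (hn : 1 ≤ n) (hd : 1 ≤ d) (a b : ℝ) (hab : a < b)
    (B C : Matrix (Fin d × Fin n) (Fin d × Fin n) ℝ)
    (K : Matrix (Fin d × Fin n) (Fin d × Fin n) ℝ)
    (hK : K = B + C * Qmat n d (b - a)) (hKinv : IsUnit K.det)
    (u : ℝ → Fin n → ℝ) (hu : ContDiffOn ℝ d u (Set.Icc a b))
    (hud : ∀ s ∈ Set.Icc a b, iteratedDerivWithin d u (Set.Icc a b) s = 0)
    (hbc : ∀ i : Fin d, ∀ p : Fin n,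
      ∑ j : Fin d, ∑ q : Fin n,
        (B (i, p) (j, q) * iteratedDerivWithin (j : ℕ) u (Set.Icc a b) a q
          + C (i, p) (j, q) * iteratedDerivWithin (j : ℕ) u (Set.Icc a b) b q) = 0) :
    ∀ s ∈ Set.Icc a b, u s = 0 :=
  boundary_value_problem_uniqueness_general n d a b hab B C K hK hKinv u hu hud hbc
end

section
/- Define (T v)(s) := −∫_s^1 v(θ) dθ for square-integrable v on (0,1). Then for every positive integer n, the function v_n defined by v_n(s) = n for s ∈ (0,1/n) and v_n(s) = 0 otherwise satisfies (T v_n)(s) = ns − 1 for s ∈ (0,1/n) and (T v_n)(s) = 0 for s ∈ [1/n,1), with ∫₀¹ (T v_n)(s)·v_n(s) ds = −1/2 and ∫₀¹ (T v_n)(s)² ds = 1/(3n). Consequently, there is no ω ∈ ℝ such that ∫₀¹ (T v)(s)·(−v(s)) ds ≤ ω ∫₀¹ (T v)(s)² ds for all square-integrable v on (0,1). -/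
/-!
Since `v_n = n·𝟙_{(0,1/n)}`, its tail integral is `T v_n (s) = n · min (s - 1/n) 0` on `[0,1]`,
which vanishes beyond `1/n`. Hence `⟨T v_n, -v_n⟩ = 1/2` for every `n`, while
`‖T v_n‖² = 1/(3n) → 0`, so no `ω` can bound the first by `ω` times the second.
-/

open MeasureTheory Set intervalIntegral

noncomputable def transportPIE (v : ℝ → ℝ) (s : ℝ) : ℝ := -∫ θ in s..1, v θ

theorem integral_indicator_Ioo_const {l c b s : ℝ} (a : ℝ) (hls : l ≤ s) (hsb : s ≤ b)
    (hcb : c ≤ b) :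
    ∫ θ in s..b, (Ioo l c).indicator (fun _ => a) θ = a * max (c - s) 0 := by
  rw [integral_of_le hsb, setIntegral_indicator measurableSet_Ioo,
    Ioc_inter_Ioo_of_right_le hcb, max_eq_left hls, setIntegral_const, Real.volume_real_Ioo,
    smul_eq_mul, mul_comm]

theorem integrableOn_sq_indicator_const {α : Type*} [MeasurableSpace α] {μ : Measure α}
    {s t : Set α} (hs : MeasurableSet s) (ht : μ t ≠ ⊤) (a : ℝ) :
    IntegrableOn (fun x => s.indicator (fun _ => a) x ^ 2) t μ := by
  have hsq : (fun x => s.indicator (fun _ => a) x ^ 2) = s.indicator fun _ => a ^ 2 := by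
    ext x
    by_cases hx : x ∈ s <;> simp [hx]
  rw [hsq]
  exact (integrableOn_const ht).indicator hs

theorem transportPIE_indicator_Ioo {c s : ℝ} (a : ℝ) (hs0 : 0 ≤ s) (hs1 : s ≤ 1)
    (hc1 : c ≤ 1) :
    transportPIE ((Ioo 0 c).indicator fun _ => a) s = a * min (s - c) 0 := by
  rw [transportPIE, integral_indicator_Ioo_const a hs0 hs1 hc1, ← neg_sub s c, ← neg_zero,
    max_neg_neg, neg_zero]
  ring

theorem integral_transportPIE_mul_indicator_Ioo {c : ℝ} (a : ℝ) (hc0 : 0 ≤ c) (hc1 : c ≤ 1) :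
    ∫ s in 0..1, transportPIE ((Ioo 0 c).indicator fun _ => a) s *
      (Ioo 0 c).indicator (fun _ => a) s = -(a ^ 2 * c ^ 2 / 2) := by
  -- at `s = c` the indicator already drops to `0`, but so does `transportPIE`
  have hpointwise : ∀ s ∈ Ioc (0 : ℝ) 1,
      transportPIE ((Ioo 0 c).indicator fun _ => a) s * (Ioo 0 c).indicator (fun _ => a) s =
        {x | x ≤ c}.indicator (fun s => a ^ 2 * (s - c)) s := by
    rintro s ⟨hs0, hs1⟩
    rw [transportPIE_indicator_Ioo a hs0.le hs1 hc1]
    rcases lt_trichotomy s c with hsc | rfl | hcs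
    · simp [hs0, hsc, hsc.le]
      ring
    · simp
    · simp [hcs.le, not_le.2 hcs]
  rw [integral_congr_ae (Filter.Eventually.of_forall fun s hs =>
      hpointwise s (by rwa [uIoc_of_le zero_le_one] at hs)),
    intervalIntegral.integral_indicator ⟨hc0, hc1⟩, intervalIntegral.integral_const_mul,
    intervalIntegral.integral_comp_sub_right (fun x => x), integral_id]
  ring

theorem integral_transportPIE_indicator_Ioo_sq {c : ℝ} (a : ℝ) (hc0 : 0 ≤ c) (hc1 : c ≤ 1) :
    ∫ s in 0..1, transportPIE ((Ioo 0 c).indicator fun _ => a) s ^ 2 = a ^ 2 * c ^ 3 / 3 := by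
  have hpointwise : ∀ s ∈ Icc (0 : ℝ) 1,
      transportPIE ((Ioo 0 c).indicator fun _ => a) s ^ 2 =
        {x | x ≤ c}.indicator (fun s => a ^ 2 * (s - c) ^ 2) s := by
    rintro s ⟨hs0, hs1⟩
    rw [transportPIE_indicator_Ioo a hs0 hs1 hc1]
    rcases le_or_gt s c with hsc | hcs
    · simp [hsc, mul_pow]
    · simp [hcs.le, not_le.2 hcs]
  rw [integral_congr fun s hs => hpointwise s (by rwa [uIcc_of_le zero_le_one] at hs),
    intervalIntegral.integral_indicator ⟨hc0, hc1⟩, intervalIntegral.integral_const_mul,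
    intervalIntegral.integral_comp_sub_right (fun x => x ^ 2), integral_pow]
  ring

/-- for the PIE operator `(T v)(s) = −∫ₛ¹ v` of the ill-posed transport
equation and `v_n = n·𝟙_{(0,1/n)}`, one has `T v_n = (ns−1)𝟙_{(0,1/n)}`, `⟨T v_n, v_n⟩ = −1/2`
and `‖T v_n‖² = 1/(3n)`; consequently no rate `ω` satisfies the dissipativity condition
`⟨T v, −v⟩ ≤ ω ⟨T v, T v⟩` for all square-integrable `v`. -/
theorem ill_posed_transport_dissipativity_fails
    (T : (ℝ → ℝ) → ℝ → ℝ)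
    (hT : ∀ (v : ℝ → ℝ) (s : ℝ), T v s = -∫ θ in s..(1:ℝ), v θ)
    (vn : ℕ → ℝ → ℝ)
    (hvn : ∀ (n : ℕ) (s : ℝ), vn n s = if s ∈ Set.Ioo (0:ℝ) (1 / (n : ℝ)) then (n : ℝ) else 0) :
    (∀ n : ℕ, 1 ≤ n →
      (∀ s ∈ Set.Ioo (0:ℝ) (1 / (n : ℝ)), T (vn n) s = (n : ℝ) * s - 1) ∧
      (∀ s ∈ Set.Ico (1 / (n : ℝ)) (1:ℝ), T (vn n) s = 0) ∧
      (∫ s in (0:ℝ)..1, T (vn n) s * vn n s = -(1 / 2)) ∧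
      (∫ s in (0:ℝ)..1, (T (vn n) s) ^ 2 = 1 / (3 * (n : ℝ)))) ∧
    ¬∃ ω : ℝ, ∀ v : ℝ → ℝ, Measurable v →
      MeasureTheory.IntegrableOn (fun s => (v s) ^ 2) (Set.Ioo 0 1) →
      (∫ s in (0:ℝ)..1, T v s * (-(v s))) ≤ ω * ∫ s in (0:ℝ)..1, (T v s) ^ 2 := by
  obtain rfl : T = transportPIE := funext fun v => funext (hT v)
  obtain rfl : vn = fun n : ℕ => (Ioo 0 (1 / (n : ℝ))).indicator fun _ => (n : ℝ) :=
    funext fun n => funext fun s => by rw [hvn, indicator_apply]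
  have hwidth : ∀ n : ℕ, 1 ≤ n → 0 ≤ 1 / (n : ℝ) ∧ 1 / (n : ℝ) ≤ 1 := fun n hn =>
    ⟨by positivity, div_le_one_of_le₀ (by exact_mod_cast hn) n.cast_nonneg⟩
  refine ⟨fun n hn => ?_, ?_⟩
  · obtain ⟨hc0, hc1⟩ := hwidth n hn
    have hn0 : (0 : ℝ) < n := by exact_mod_cast hn
    refine ⟨fun s hs => ?_, fun s hs => ?_, ?_, ?_⟩
    · rw [transportPIE_indicator_Ioo _ hs.1.le (hs.2.le.trans hc1) hc1,
        min_eq_left (by linarith [hs.2])]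
      field_simp
    · rw [transportPIE_indicator_Ioo _ (hc0.trans hs.1) hs.2.le hc1,
        min_eq_right (by linarith [hs.1]), mul_zero]
    · rw [integral_transportPIE_mul_indicator_Ioo _ hc0 hc1]
      field_simp
    · rw [integral_transportPIE_indicator_Ioo_sq _ hc0 hc1]
      field_simp
  rintro ⟨ω, hω⟩
  obtain ⟨n, hωn⟩ := exists_nat_gt (max ω 1)
  have hn : 1 ≤ n := by exact_mod_cast (le_max_right ω 1).trans hωn.le
  obtain ⟨hc0, hc1⟩ := hwidth n hn
  have hdiss := hω ((Ioo 0 (1 / (n : ℝ))).indicator fun _ => (n : ℝ))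
    (measurable_const.indicator measurableSet_Ioo)
    (integrableOn_sq_indicator_const measurableSet_Ioo measure_Ioo_lt_top.ne _)
  simp only [mul_neg, intervalIntegral.integral_neg,
    integral_transportPIE_mul_indicator_Ioo _ hc0 hc1,
    integral_transportPIE_indicator_Ioo_sq _ hc0 hc1] at hdiss
  field_simp at hdiss
  linarith [le_max_left ω 1]
end

section
/- Let K : [0,1]×[0,1] → ℝ^{2×2} be measurable with ∫₀¹∫₀¹ ‖K(s,θ)‖² dθ ds < ∞, and let M := diag(0,1) ∈ ℝ^{2×2}. Then there is no ε > 0 such that ∫₀¹ v(s)ᵀ M v(s) ds + ∫₀¹∫₀¹ v(s)ᵀ K(s,θ) v(θ) dθ ds ≥ ε ∫₀¹ ‖v(s)‖² ds for all square-integrable v : (0,1) → ℝ². -/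
/-!
Test the quadratic form on `v = 𝟙_{(0,δ)} e₀`. The multiplier part vanishes because `M₀₀ = 0`,
and `‖v‖² = δ`, so coercivity would force `ε δ ≤ ∫_{(0,δ)²} K₀₀`. By absolute continuity of the
integral, `∫_{(0,δ)²} K₀₀² < ε²` for small `δ`, and then the pointwise AM–GM bound
`K₀₀ ≤ (δ/ε) K₀₀² / 2 + ε / (2δ)`, integrated over a square of area `δ²`, gives
`∫_{(0,δ)²} K₀₀ < ε δ`.
-/

open scoped Matrix
open MeasureTheory Set Filter Topology

namespace MeasureTheory

variable {α : Type*} [MeasurableSpace α] {μ : Measure α} {s : Set α} {g : α → ℝ}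

theorem IntegrableOn.of_integrableOn_sq (hgm : AEStronglyMeasurable g (μ.restrict s))
    (hg : IntegrableOn (fun x => g x ^ 2) s μ) (hs : μ s ≠ ⊤) : IntegrableOn g s μ :=
  have : IsFiniteMeasure (μ.restrict s) := isFiniteMeasure_restrict.mpr hs
  ((memLp_two_iff_integrable_sq hgm).2 hg).integrable one_le_two

theorem IntegrableOn.sq_apply_of_sum_sq {ι κ : Type*} [Fintype ι] [Fintype κ]
    {A : α → Matrix ι κ ℝ} (hA : IntegrableOn (fun x => ∑ i, ∑ j, A x i j ^ 2) s μ) {i : ι}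
    {j : κ} (hAij : AEStronglyMeasurable (fun x => A x i j) (μ.restrict s)) :
    IntegrableOn (fun x => A x i j ^ 2) s μ := by
  refine hA.mono' (hAij.pow 2) (ae_of_all _ fun x => ?_)
  rw [Real.norm_of_nonneg (sq_nonneg _)]
  calc A x i j ^ 2 ≤ ∑ j', A x i j' ^ 2 :=
        Finset.single_le_sum (fun j' _ => sq_nonneg (A x i j')) (Finset.mem_univ j)
    _ ≤ ∑ i', ∑ j', A x i' j' ^ 2 :=
        Finset.single_le_sum (f := fun i' => ∑ j', A x i' j' ^ 2)
          (fun i' _ => Finset.sum_nonneg fun j' _ => sq_nonneg (A x i' j')) (Finset.mem_univ i)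

theorem setIntegral_le_of_integrableOn_sq (hg : IntegrableOn (fun x => g x ^ 2) s μ)
    (hs : μ s ≠ ⊤) {t : ℝ} (ht : 0 < t) :
    ∫ x in s, g x ∂μ ≤ t / 2 * ∫ x in s, g x ^ 2 ∂μ + μ.real s / (2 * t) := by
  by_cases hgi : IntegrableOn g s μ
  · have amgm : ∀ x, g x ≤ t / 2 * g x ^ 2 + 1 / (2 * t) := fun x => by
      have : t / 2 * g x ^ 2 + 1 / (2 * t) - g x = (t * g x - 1) ^ 2 / (2 * t) := by
        field_simp; ring
      linarith [show 0 ≤ (t * g x - 1) ^ 2 / (2 * t) by positivity]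
    calc ∫ x in s, g x ∂μ ≤ ∫ x in s, (t / 2 * g x ^ 2 + 1 / (2 * t)) ∂μ :=
          integral_mono hgi ((hg.const_mul _).add (integrableOn_const hs)) amgm
      _ = t / 2 * ∫ x in s, g x ^ 2 ∂μ + μ.real s / (2 * t) := by
          rw [integral_add (hg.const_mul _) (integrableOn_const hs), integral_const_mul,
            setIntegral_const, smul_eq_mul]
          ring
  · have : 0 ≤ ∫ x in s, g x ^ 2 ∂μ := setIntegral_nonneg_of_ae (ae_of_all _ fun x => sq_nonneg _)
    rw [integral_undef hgi]
    positivity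

theorem setIntegral_lt_mul_of_setIntegral_sq_lt (hg : IntegrableOn (fun x => g x ^ 2) s μ)
    (hs : μ s ≠ ⊤) {c d : ℝ} (hc : 0 < c) (hd : 0 < d) (hμs : μ.real s ≤ d ^ 2)
    (hg_lt : ∫ x in s, g x ^ 2 ∂μ < c ^ 2) : ∫ x in s, g x ∂μ < c * d :=
  calc ∫ x in s, g x ∂μ ≤ d / c / 2 * (∫ x in s, g x ^ 2 ∂μ) + μ.real s / (2 * (d / c)) :=
        setIntegral_le_of_integrableOn_sq hg hs (div_pos hd hc)
    _ < d / c / 2 * c ^ 2 + d ^ 2 / (2 * (d / c)) := by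
        apply add_lt_add_of_lt_of_le <;> gcongr
    _ = c * d := by field_simp; ring

end MeasureTheory

theorem intervalIntegral_indicator {E : Type*} [NormedAddCommGroup E] [NormedSpace ℝ E]
    {a b : ℝ} (hab : a ≤ b) {S : Set ℝ} (hS : MeasurableSet S) (hSab : S ⊆ Ioc a b)
    (f : ℝ → E) : ∫ x in a..b, S.indicator f x = ∫ x in S, f x := by
  rw [intervalIntegral.integral_of_le hab, setIntegral_indicator hS, inter_eq_right.2 hSab]

theorem intervalIntegral_intervalIntegral_indicator_mul_mul_indicator {a b : ℝ} (hab : a ≤ b)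
    {S T : Set ℝ} (hS : MeasurableSet S) (hT : MeasurableSet T) (hSab : S ⊆ Ioc a b)
    (hTab : T ⊆ Ioc a b) {f : ℝ → ℝ → ℝ} (hf : IntegrableOn (fun p : ℝ × ℝ => f p.1 p.2) (S ×ˢ T)) :
    ∫ x in a..b, ∫ y in a..b, S.indicator 1 x * f x y * T.indicator 1 y =
      ∫ p in S ×ˢ T, f p.1 p.2 := by
  have hinner : ∀ x, ∫ y in a..b, S.indicator 1 x * f x y * T.indicator 1 y =
      S.indicator (fun x => ∫ y in T, f x y) x := by
    intro x
    by_cases hx : x ∈ S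
    · simp only [indicator_of_mem hx, Pi.one_apply, one_mul,
        ← intervalIntegral_indicator hab hT hTab]
      congr 1 with y
      by_cases hy : y ∈ T <;> simp [hy]
    · simp [hx]
  simp_rw [hinner, intervalIntegral_indicator hab hS hSab, Measure.volume_eq_prod]
  exact (setIntegral_prod _ hf).symm

theorem tendsto_setIntegral_Ioo_prod_Ioo_nhdsGT_zero {F : ℝ × ℝ → ℝ}
    (hF : IntegrableOn F (Ioo 0 1 ×ˢ Ioo 0 1)) :
    Tendsto (fun δ => ∫ p in Ioo 0 δ ×ˢ Ioo 0 δ, F p) (𝓝[>] 0) (𝓝 0) := by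
  have hvol : Tendsto (fun δ => volume (Ioo (0:ℝ) δ ×ˢ Ioo (0:ℝ) δ)) (𝓝[>] 0) (𝓝 0) := by
    have : Tendsto (fun δ : ℝ => ENNReal.ofReal (δ * δ)) (𝓝[>] 0) (𝓝 0) :=
      ((ENNReal.continuous_ofReal.comp (continuous_id.mul continuous_id)).tendsto' 0 0
        (by simp)).mono_left nhdsWithin_le_nhds
    refine this.congr' ?_
    filter_upwards [self_mem_nhdsWithin] with δ hδ
    rw [Measure.volume_eq_prod, Measure.prod_prod, Real.volume_Ioo, sub_zero,
      ENNReal.ofReal_mul hδ.out.le]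
  have hrestrict : Tendsto (fun δ => volume.restrict (Ioo 0 1 ×ˢ Ioo 0 1)
      (Ioo (0:ℝ) δ ×ˢ Ioo (0:ℝ) δ)) (𝓝[>] 0) (𝓝 0) :=
    tendsto_of_tendsto_of_tendsto_of_le_of_le tendsto_const_nhds hvol (fun _ => zero_le)
      fun _ => Measure.restrict_apply_le _ _
  refine (hF.tendsto_setIntegral_nhds_zero hrestrict).congr' ?_
  filter_upwards [Ioo_mem_nhdsGT one_pos] with δ hδ
  rw [Measure.restrict_restrict (measurableSet_Ioo.prod measurableSet_Ioo), inter_eq_left.2]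
  exact prod_mono (Ioo_subset_Ioo_right hδ.2.le) (Ioo_subset_Ioo_right hδ.2.le)

section indicatorSingle

variable {n : Type*} [Fintype n] [DecidableEq n]

noncomputable def indicatorSingle (S : Set ℝ) (i : n) (s : ℝ) : n → ℝ :=
  Pi.single i (S.indicator 1 s)

theorem measurable_indicatorSingle {S : Set ℝ} (hS : MeasurableSet S) (i : n) :
    Measurable (indicatorSingle S i) :=
  (continuous_single i).measurable.comp (measurable_one.indicator hS)

theorem sum_sq_indicatorSingle (S : Set ℝ) (i : n) (s : ℝ) :
    ∑ j, indicatorSingle S i s j ^ 2 = S.indicator 1 s := by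
  by_cases hs : s ∈ S <;> simp [indicatorSingle, hs, Pi.single_apply, ite_pow]

theorem indicatorSingle_dotProduct_mulVec (S T : Set ℝ) (i j : n) (A : Matrix n n ℝ) (s t : ℝ) :
    indicatorSingle S i s ⬝ᵥ (A *ᵥ indicatorSingle T j t) =
      S.indicator 1 s * A i j * T.indicator 1 t := by
  simp only [indicatorSingle, Matrix.mulVec_single, op_smul_eq_smul, dotProduct_smul,
    single_dotProduct, Matrix.col_apply, smul_eq_mul]
  ring

theorem integrableOn_sum_sq_indicatorSingle {S U : Set ℝ} (hS : MeasurableSet S)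
    (hU : volume U ≠ ⊤) (i : n) :
    IntegrableOn (fun s => ∑ j, indicatorSingle S i s j ^ 2) U := by
  simp_rw [sum_sq_indicatorSingle]
  exact (integrableOn_const hU).indicator hS

variable {a b : ℝ} {S : Set ℝ}

theorem intervalIntegral_sum_sq_indicatorSingle (hab : a ≤ b) (hS : MeasurableSet S)
    (hSab : S ⊆ Ioc a b) (i : n) :
    ∫ s in a..b, ∑ j, indicatorSingle S i s j ^ 2 = volume.real S := by
  simp_rw [sum_sq_indicatorSingle, intervalIntegral_indicator hab hS hSab, Pi.one_apply,
    setIntegral_const, smul_eq_mul, mul_one]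

theorem intervalIntegral_indicatorSingle_dotProduct_mulVec (hab : a ≤ b) (hS : MeasurableSet S)
    (hSab : S ⊆ Ioc a b) (i : n) (A : Matrix n n ℝ) :
    ∫ s in a..b, indicatorSingle S i s ⬝ᵥ (A *ᵥ indicatorSingle S i s) = A i i * volume.real S := by
  have hpt : ∀ s, S.indicator 1 s * A i i * S.indicator 1 s = S.indicator (fun _ => A i i) s :=
    fun s => by by_cases hs : s ∈ S <;> simp [hs]
  simp_rw [indicatorSingle_dotProduct_mulVec, hpt, intervalIntegral_indicator hab hS hSab,
    setIntegral_const, smul_eq_mul, mul_comm]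

theorem intervalIntegral_intervalIntegral_indicatorSingle_dotProduct_mulVec (hab : a ≤ b)
    (hS : MeasurableSet S) (hSab : S ⊆ Ioc a b) (i : n)
    {K : ℝ → ℝ → Matrix n n ℝ} (hK : IntegrableOn (fun p : ℝ × ℝ => K p.1 p.2 i i) (S ×ˢ S)) :
    ∫ s in a..b, ∫ θ in a..b, indicatorSingle S i s ⬝ᵥ (K s θ *ᵥ indicatorSingle S i θ) =
      ∫ p in S ×ˢ S, K p.1 p.2 i i := by
  simp_rw [indicatorSingle_dotProduct_mulVec]
  exact intervalIntegral_intervalIntegral_indicator_mul_mul_indicator hab hS hS hSab hSab hK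

end indicatorSingle

/-- the paper's wave-equation ill-posedness argument: an operator
`Q v = M v + ∫ K(·,θ) v(θ) dθ` whose multiplier part `M = diag(0,1)` annihilates the first
component cannot satisfy the coercivity condition `Q ⪰ εI` on `L²((0,1); ℝ²)`, for any
square-integrable (Hilbert–Schmidt) kernel `K`. -/
theorem degenerate_multiplier_plus_HS_kernel_not_coercive
    (K : ℝ → ℝ → Matrix (Fin 2) (Fin 2) ℝ)
    (hKmeas : ∀ i j : Fin 2, Measurable fun p : ℝ × ℝ => K p.1 p.2 i j)
    (hKL2 : MeasureTheory.IntegrableOn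
      (fun p : ℝ × ℝ => ∑ i : Fin 2, ∑ j : Fin 2, (K p.1 p.2 i j) ^ 2)
      (Set.Ioo (0:ℝ) 1 ×ˢ Set.Ioo (0:ℝ) 1))
    (M : Matrix (Fin 2) (Fin 2) ℝ) (hM : M = Matrix.diagonal ![0, 1]) :
    ¬∃ ε > (0:ℝ), ∀ v : ℝ → Fin 2 → ℝ, Measurable v →
      MeasureTheory.IntegrableOn (fun s => ∑ i : Fin 2, (v s i) ^ 2) (Set.Ioo 0 1) →
      ε * ∫ s in (0:ℝ)..1, ∑ i : Fin 2, (v s i) ^ 2 ≤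
        (∫ s in (0:ℝ)..1, dotProduct (v s) (M.mulVec (v s)))
          + ∫ s in (0:ℝ)..1, ∫ θ in (0:ℝ)..1, dotProduct (v s) ((K s θ).mulVec (v θ)) := by
  rintro ⟨ε, hε, hcoer⟩
  have hK00 := IntegrableOn.sq_apply_of_sum_sq (A := fun p : ℝ × ℝ => K p.1 p.2) hKL2
    (hKmeas 0 0).aestronglyMeasurable
  obtain ⟨δ, hsmall, hδ0, hδ1⟩ := (((tendsto_setIntegral_Ioo_prod_Ioo_nhdsGT_zero hK00).eventually
    (eventually_lt_nhds (pow_pos hε 2))).and (Ioo_mem_nhdsGT one_pos)).exists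
  set S := Ioo (0:ℝ) δ
  have hS01 : S ⊆ Ioc 0 1 := Ioo_subset_Ioc_self.trans (Ioc_subset_Ioc_right hδ1.le)
  have hSS : S ×ˢ S ⊆ Ioo (0:ℝ) 1 ×ˢ Ioo (0:ℝ) 1 :=
    prod_mono (Ioo_subset_Ioo_right hδ1.le) (Ioo_subset_Ioo_right hδ1.le)
  have hSS_fin : volume (S ×ˢ S) ≠ ⊤ :=
    ((Metric.isBounded_Ioo 0 δ).prod (Metric.isBounded_Ioo 0 δ)).measure_lt_top.ne
  have hSS_vol : volume.real (S ×ˢ S) = δ ^ 2 := by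
    rw [Measure.volume_eq_prod, measureReal_prod_prod, Real.volume_real_Ioo_of_le hδ0.le,
      sub_zero, sq]
  have key := hcoer (indicatorSingle S 0) (measurable_indicatorSingle measurableSet_Ioo 0)
    (integrableOn_sum_sq_indicatorSingle measurableSet_Ioo measure_Ioo_lt_top.ne 0)
  rw [intervalIntegral_sum_sq_indicatorSingle zero_le_one measurableSet_Ioo hS01,
    intervalIntegral_indicatorSingle_dotProduct_mulVec zero_le_one measurableSet_Ioo hS01,
    intervalIntegral_intervalIntegral_indicatorSingle_dotProduct_mulVec zero_le_one
      measurableSet_Ioo hS01 0 (IntegrableOn.of_integrableOn_sq (hKmeas 0 0).aestronglyMeasurable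
        (hK00.mono_set hSS) hSS_fin),
    Real.volume_real_Ioo_of_le hδ0.le, sub_zero, hM] at key
  simp only [Matrix.diagonal_apply_eq, Matrix.cons_val_zero, zero_mul, zero_add] at key
  exact key.not_gt
    (setIntegral_lt_mul_of_setIntegral_sq_lt (hK00.mono_set hSS) hSS_fin hε hδ0 hSS_vol.le hsmall)
end
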